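/- For every real r with 0 < r ≤ 1 and l = 0, there exist continuum-many (cardinality 2^ℵ₀) pairwise distinct subsets of ℝ, each with Hausdorff dimension r, Lebesgue measure 0, and topological dimension 0. -/

import Mathlib

open scoped ENNReal
open MeasureTheory Set

universe u

/-- `IndLE n X t` means the small inductive dimension of `X` is `≤ n - 1`. -/
def IndLE : ℕ → (X : Type u) → TopologicalSpace X → Prop
  | 0, X, _ => IsEmpty X
  | n + 1, X, t => by
      letI := t
      exact ∃ B : Set (Set X), TopologicalSpace.IsTopologicalBasis B ∧
        ∀ U ∈ B, IndLE n (frontier U) inferInstance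

/-- Small inductive dimension ≤ 0. -/
def IndDimLEZero (X : Type u) [t : TopologicalSpace X] : Prop := IndLE 1 X t

/-- Small inductive (topological) dimension, as an extended nonnegative real:
the least `k : ℕ` such that `ind X ≤ k` (`⊤` if there is no finite bound). -/
noncomputable def indDim (X : Type u) [t : TopologicalSpace X] : ℝ≥0∞ :=
  sInf ((fun k : ℕ => (k : ℝ≥0∞)) '' {k : ℕ | IndLE (k + 1) X t})

/-!
For `0 < c < 1/2` with `c ^ d = 1/2`, the set `C` of sums `∑ fₙ cⁿ` (`f : ℕ → Bool`) has
Hausdorff dimension `d`: its `2ⁿ` cylinders of diameter `O(cⁿ)` give `μH[d] C < ∞`, and the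
first digit where `f` and `g` differ separates their sums by `≳ cⁿ`, so replacing `c` by `1/2`
is a `d`-Hölder map from `C` onto an interval. A union of such sets with dimensions increasing
to `r` has dimension `r` and, every piece having dimension `< 1`, Lebesgue measure zero. A null
subset of `ℝ` has empty interior, so intervals with endpoints outside it cut out a basis of
clopen sets, i.e. `ind = 0`. Adding one point `a > 2` gives continuum-many such sets.
-/

open Filter Topology Cardinal Metric

section CantorFunction

variable {c : ℝ} {f g : ℕ → Bool}

lemma cantorFunction_nonneg (hc : 0 ≤ c) : 0 ≤ cantorFunction c f :=
  tsum_nonneg fun _ => cantorFunctionAux_nonneg hc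

lemma cantorFunction_le_inv_one_sub (hc0 : 0 ≤ c) (hc1 : c < 1) :
    cantorFunction c f ≤ (1 - c)⁻¹ := by
  have htop : cantorFunction c (fun _ => true) = (1 - c)⁻¹ := by
    simp only [cantorFunction, cantorFunctionAux, cond_true]
    exact tsum_geometric_of_lt_one hc0 hc1
  exact htop ▸ cantorFunction_le hc0 hc1 fun _ _ => rfl

lemma cantorFunction_sub_eq_pow_mul (hc0 : 0 ≤ c) (hc1 : c < 1) {n : ℕ}
    (h : ∀ i < n, f i = g i) :
    cantorFunction c f - cantorFunction c g =
      c ^ n * (cantorFunction c (fun i => f (i + n)) - cantorFunction c (fun i => g (i + n))) := by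
  induction n generalizing f g with
  | zero => simp
  | succ n ih =>
    rw [cantorFunction_succ f hc0 hc1, cantorFunction_succ g hc0 hc1, h 0 n.succ_pos,
      add_sub_add_left_eq_sub, ← mul_sub, ih fun i hi => h (i + 1) (by omega), pow_succ',
      mul_assoc]
    rfl

lemma abs_cantorFunction_sub_le (hc0 : 0 ≤ c) (hc1 : c < 1) {n : ℕ} (h : ∀ i < n, f i = g i) :
    |cantorFunction c f - cantorFunction c g| ≤ c ^ n * (1 - c)⁻¹ := by
  rw [cantorFunction_sub_eq_pow_mul hc0 hc1 h, abs_mul, abs_of_nonneg (pow_nonneg hc0 n)]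
  gcongr
  simpa using abs_sub_le_of_le_of_le (cantorFunction_nonneg hc0)
    (cantorFunction_le_inv_one_sub hc0 hc1) (cantorFunction_nonneg hc0)
    (cantorFunction_le_inv_one_sub hc0 hc1)

lemma le_abs_cantorFunction_sub_of_head (hc0 : 0 ≤ c) (hc : c < 1 / 2) (h0 : f 0 ≠ g 0) :
    (1 - 2 * c) / (1 - c) ≤ |cantorFunction c f - cantorFunction c g| := by
  wlog hf : f 0 = true generalizing f g
  · rw [abs_sub_comm]
    exact this h0.symm (by simpa [hf] using h0)
  have hg : g 0 = false := by simpa [hf] using h0.symm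
  have hc1 : c < 1 := by linarith
  have h1c : 0 < 1 - c := by linarith
  have hf' := cantorFunction_nonneg (f := fun n => f (n + 1)) hc0
  have hg' : (1 - c) * cantorFunction c (fun n => g (n + 1)) ≤ 1 := by
    simpa [h1c.ne'] using mul_le_mul_of_nonneg_left
      (cantorFunction_le_inv_one_sub (f := fun n => g (n + 1)) hc0 hc1) h1c.le
  refine le_trans ?_ (le_abs_self _)
  rw [cantorFunction_succ f hc0 hc1, cantorFunction_succ g hc0 hc1, hf, hg, div_le_iff₀ h1c,
    Bool.cond_true, Bool.cond_false]
  nlinarith [mul_nonneg (mul_nonneg hc0 hf') h1c.le, mul_le_mul_of_nonneg_left hg' hc0]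

lemma le_abs_cantorFunction_sub (hc0 : 0 ≤ c) (hc : c < 1 / 2) {n : ℕ}
    (h : ∀ i < n, f i = g i) (hn : f n ≠ g n) :
    c ^ n * ((1 - 2 * c) / (1 - c)) ≤ |cantorFunction c f - cantorFunction c g| := by
  rw [cantorFunction_sub_eq_pow_mul hc0 (by linarith) h, abs_mul,
    abs_of_nonneg (pow_nonneg hc0 n)]
  gcongr
  exact le_abs_cantorFunction_sub_of_head hc0 hc (by simpa using hn)

lemma Icc_subset_range_cantorFunction_half :
    Icc (0 : ℝ) 2 ⊆ range (cantorFunction (1 / 2)) := by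
  intro t ht
  obtain ⟨digits, -, hdigits⟩ := Real.ofDigits_SurjOn (b := 2) one_lt_two
    (show t / 2 ∈ Icc (0 : ℝ) 1 from ⟨by linarith [ht.1], by linarith [ht.2]⟩)
  refine ⟨fun n => digits n = 1, ?_⟩
  have hterm : ∀ n, cantorFunctionAux (1 / 2) (fun n => digits n = 1) n =
      2 * Real.ofDigitsTerm digits n := by
    intro n
    simp only [cantorFunctionAux, Real.ofDigitsTerm]
    generalize digits n = k
    fin_cases k <;> simp [pow_succ]
  rw [cantorFunction, funext hterm, tsum_mul_left, ← Real.ofDigits, hdigits]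
  ring

end CantorFunction

section CantorDimension

variable {c d : ℝ}

lemma ediam_image_cantorFunction_cylinder_le (hc0 : 0 ≤ c) (hc1 : c < 1) (n : ℕ)
    (v : Fin n → Bool) :
    ediam (cantorFunction c '' {f | ∀ i : Fin n, f i = v i}) ≤
      ENNReal.ofReal (c ^ n * (1 - c)⁻¹) := by
  refine ediam_le ?_
  rintro _ ⟨f, hf, rfl⟩ _ ⟨g, hg, rfl⟩
  rw [edist_dist, Real.dist_eq]
  exact ENNReal.ofReal_le_ofReal <| abs_cantorFunction_sub_le hc0 hc1 fun i hi =>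
    (hf ⟨i, hi⟩).trans (hg ⟨i, hi⟩).symm

lemma hausdorffMeasure_range_cantorFunction_le (hc0 : 0 ≤ c) (hc1 : c < 1) (hd : 0 < d)
    (hcd : c ^ d = 1 / 2) :
    μH[d] (range (cantorFunction c)) ≤ ENNReal.ofReal ((1 - c)⁻¹ ^ d) := by
  have hdiam := ediam_image_cantorFunction_cylinder_le hc0 hc1
  have htend : Tendsto (fun n : ℕ => ENNReal.ofReal (c ^ n * (1 - c)⁻¹)) atTop (𝓝 0) := by
    simpa using ENNReal.tendsto_ofReal
      ((tendsto_pow_atTop_nhds_zero_of_lt_one hc0 hc1).mul_const (1 - c)⁻¹)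
  refine (Measure.hausdorffMeasure_le_liminf_sum d _ _ htend
    (fun n (v : Fin n → Bool) => cantorFunction c '' {f | ∀ i : Fin n, f i = v i})
    (.of_forall (hdiam ·)) (.of_forall fun n => ?_)).trans
    (liminf_le_of_frequently_le' (.of_forall fun n => ?_))
  · rintro _ ⟨f, rfl⟩
    exact mem_iUnion.2 ⟨fun i => f i, f, fun _ => rfl, rfl⟩
  have hterm : (c ^ n * (1 - c)⁻¹) ^ d = (1 / 2) ^ n * (1 - c)⁻¹ ^ d := by
    rw [Real.mul_rpow (by positivity) (inv_pos.2 (sub_pos.2 hc1)).le,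
      ← Real.rpow_pow_comm hc0, hcd]
  calc ∑ v : Fin n → Bool, ediam (cantorFunction c '' {f | ∀ i : Fin n, f i = v i}) ^ d
      ≤ ∑ _v : Fin n → Bool, ENNReal.ofReal (c ^ n * (1 - c)⁻¹) ^ d :=
        Finset.sum_le_sum fun v _ => ENNReal.rpow_le_rpow (hdiam n v) hd.le
    _ = ENNReal.ofReal ((1 - c)⁻¹ ^ d) := by
        rw [Finset.sum_const, Finset.card_univ, Fintype.card_fun, Fintype.card_bool,
          Fintype.card_fin, nsmul_eq_mul, ENNReal.ofReal_rpow_of_nonneg (by positivity) hd.le,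
          hterm, Nat.cast_pow, Nat.cast_ofNat, ← ENNReal.ofReal_ofNat,
          ← ENNReal.ofReal_pow zero_le_two,
          ← ENNReal.ofReal_mul (by positivity), ← mul_assoc, ← mul_pow]
        norm_num

lemma dimH_range_cantorFunction_le (hc0 : 0 ≤ c) (hc1 : c < 1) (hd : 0 < d)
    (hcd : c ^ d = 1 / 2) : dimH (range (cantorFunction c)) ≤ ENNReal.ofReal d := by
  refine dimH_le_of_hausdorffMeasure_ne_top ?_
  rw [Real.coe_toNNReal d hd.le]
  exact ((hausdorffMeasure_range_cantorFunction_le hc0 hc1 hd hcd).trans_lt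
    ENNReal.ofReal_lt_top).ne

lemma abs_cantorFunction_half_sub_le (hc0 : 0 < c) (hc : c < 1 / 2) (hd : 0 < d)
    (hcd : c ^ d = 1 / 2) (f g : ℕ → Bool) :
    |cantorFunction (1 / 2) f - cantorFunction (1 / 2) g| ≤
      2 * ((1 - 2 * c) / (1 - c)) ^ (-d) * |cantorFunction c f - cantorFunction c g| ^ d := by
  have hgap : 0 < (1 - 2 * c) / (1 - c) := div_pos (by linarith) (by linarith)
  rcases eq_or_ne f g with rfl | hfg
  · simp only [sub_self, abs_zero]
    positivity
  set n := PiNat.firstDiff f g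
  have hagree : ∀ i < n, f i = g i := fun i hi => PiNat.apply_eq_of_lt_firstDiff hi
  calc |cantorFunction (1 / 2) f - cantorFunction (1 / 2) g|
      ≤ (1 / 2) ^ n * (1 - 1 / 2)⁻¹ :=
        abs_cantorFunction_sub_le (by norm_num) (by norm_num) hagree
    _ = 2 * ((1 - 2 * c) / (1 - c)) ^ (-d) * (c ^ n * ((1 - 2 * c) / (1 - c))) ^ d := by
        rw [Real.mul_rpow (by positivity) hgap.le, ← Real.rpow_pow_comm hc0.le, hcd,
          Real.rpow_neg hgap.le]
        field_simp
        norm_num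
    _ ≤ 2 * ((1 - 2 * c) / (1 - c)) ^ (-d) * |cantorFunction c f - cantorFunction c g| ^ d := by
        gcongr
        exact le_abs_cantorFunction_sub hc0.le hc hagree (PiNat.apply_firstDiff_ne hfg)

noncomputable def cantorToDyadic (c : ℝ) : ℝ → ℝ :=
  cantorFunction (1 / 2) ∘ Function.invFun (cantorFunction c)

lemma cantorToDyadic_cantorFunction (hc0 : 0 < c) (hc : c < 1 / 2) (f : ℕ → Bool) :
    cantorToDyadic c (cantorFunction c f) = cantorFunction (1 / 2) f :=
  congrArg (cantorFunction (1 / 2))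
    (Function.leftInverse_invFun (cantorFunction_injective hc0 hc) f)

lemma holderOnWith_cantorToDyadic (hc0 : 0 < c) (hc : c < 1 / 2) (hd : 0 < d)
    (hcd : c ^ d = 1 / 2) :
    HolderOnWith (2 * ((1 - 2 * c) / (1 - c)) ^ (-d)).toNNReal d.toNNReal (cantorToDyadic c)
      (range (cantorFunction c)) := by
  have hK : 0 ≤ 2 * ((1 - 2 * c) / (1 - c)) ^ (-d) :=
    mul_nonneg zero_le_two (Real.rpow_nonneg (div_pos (by linarith) (by linarith)).le _)
  rintro _ ⟨f, rfl⟩ _ ⟨g, rfl⟩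
  rw [cantorToDyadic_cantorFunction hc0 hc, cantorToDyadic_cantorFunction hc0 hc, edist_dist,
    edist_dist, Real.dist_eq, Real.dist_eq, Real.coe_toNNReal d hd.le,
    ENNReal.ofReal_rpow_of_nonneg (abs_nonneg _) hd.le, ← ENNReal.ofReal.eq_def,
    ← ENNReal.ofReal_mul hK]
  exact ENNReal.ofReal_le_ofReal (abs_cantorFunction_half_sub_le hc0 hc hd hcd f g)

lemma le_dimH_range_cantorFunction (hc0 : 0 < c) (hc : c < 1 / 2) (hd : 0 < d)
    (hcd : c ^ d = 1 / 2) : ENNReal.ofReal d ≤ dimH (range (cantorFunction c)) := by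
  have hsurj : Icc (0 : ℝ) 2 ⊆ cantorToDyadic c '' range (cantorFunction c) := by
    intro t ht
    obtain ⟨f, rfl⟩ := Icc_subset_range_cantorFunction_half ht
    exact ⟨_, mem_range_self f, cantorToDyadic_cantorFunction hc0 hc f⟩
  have hIcc : dimH (Icc (0 : ℝ) 2) = 1 := by
    rw [Real.dimH_of_nonempty_interior (by simp), Module.finrank_self, Nat.cast_one]
  have := (hIcc ▸ dimH_mono hsurj).trans
    ((holderOnWith_cantorToDyadic hc0 hc hd hcd).dimH_image_le
      (Real.toNNReal_pos.2 hd))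
  rwa [ENNReal.le_div_iff_mul_le (.inl (by simpa using hd)) (.inl ENNReal.coe_ne_top),
    one_mul] at this

theorem dimH_range_cantorFunction (hc0 : 0 < c) (hc : c < 1 / 2) (hd : 0 < d)
    (hcd : c ^ d = 1 / 2) : dimH (range (cantorFunction c)) = ENNReal.ofReal d :=
  (dimH_range_cantorFunction_le hc0.le (by linarith) hd hcd).antisymm
    (le_dimH_range_cantorFunction hc0 hc hd hcd)

theorem exists_subset_Icc_dimH_eq (hd0 : 0 < d) (hd1 : d < 1) :
    ∃ C ⊆ Icc (0 : ℝ) 2, dimH C = ENNReal.ofReal d := by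
  set c : ℝ := (1 / 2) ^ d⁻¹
  have hc0 : 0 < c := by positivity
  have hc : c < 1 / 2 := Real.rpow_lt_self_of_lt_one (by norm_num) (by norm_num)
    ((one_lt_inv₀ hd0).2 hd1)
  have hcd : c ^ d = 1 / 2 := by
    rw [← Real.rpow_mul (by norm_num), inv_mul_cancel₀ hd0.ne', Real.rpow_one]
  refine ⟨range (cantorFunction c), ?_, dimH_range_cantorFunction hc0 hc hd0 hcd⟩
  rintro _ ⟨f, rfl⟩
  have hle := cantorFunction_le_inv_one_sub (f := f) hc0.le (by linarith)
  have h2 : (1 - c)⁻¹ ≤ 2 := by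
    rw [inv_le_comm₀ (by linarith) (by norm_num)]
    linarith
  exact ⟨cantorFunction_nonneg hc0.le, hle.trans h2⟩

end CantorDimension

lemma volume_eq_zero_of_dimH_lt_one {s : Set ℝ} (h : dimH s < 1) : volume s = 0 := by
  rw [← hausdorffMeasure_real]
  exact hausdorffMeasure_of_dimH_lt (d := 1) (by simpa using h)

theorem exists_subset_Icc_dimH_eq_volume_eq_zero {r : ℝ} (hr0 : 0 < r) (hr1 : r ≤ 1) :
    ∃ T ⊆ Icc (0 : ℝ) 2, dimH T = ENNReal.ofReal r ∧ volume T = 0 := by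
  obtain ⟨u, hu_mono, hu_mem, hu_tendsto⟩ := exists_seq_strictMono_tendsto' hr0
  choose C hC_sub hC_dim using fun n =>
    exists_subset_Icc_dimH_eq (hu_mem n).1 ((hu_mem n).2.trans_le hr1)
  refine ⟨⋃ n, C n, iUnion_subset hC_sub, ?_,
    measure_iUnion_null fun n => volume_eq_zero_of_dimH_lt_one ?_⟩
  · rw [dimH_iUnion]
    simp_rw [hC_dim]
    exact iSup_eq_of_tendsto (fun m n h => ENNReal.ofReal_le_ofReal (hu_mono.monotone h))
      (ENNReal.tendsto_ofReal hu_tendsto)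
  · rw [hC_dim, ENNReal.ofReal_lt_one]
    exact (hu_mem n).2.trans_le hr1

section InductiveDimension

lemma indLE_one_of_isTopologicalBasis_isClopen {X : Type u} [TopologicalSpace X]
    (h : TopologicalSpace.IsTopologicalBasis {s : Set X | IsClopen s}) :
    IndLE 1 X inferInstance :=
  ⟨_, h, fun _ hs => isEmpty_coe_sort.2 hs.frontier_eq⟩

lemma indDim_eq_zero_of_indLE_one {X : Type u} [TopologicalSpace X]
    (h : IndLE 1 X inferInstance) : indDim X = 0 :=
  nonpos_iff_eq_zero.1 <| sInf_le ⟨0, h, Nat.cast_zero⟩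

lemma isClopen_preimage_val_Ioo {F : Set ℝ} {a b : ℝ} (ha : a ∉ F) (hb : b ∉ F) :
    IsClopen ((↑) ⁻¹' Ioo a b : Set F) := by
  have hIcc : ((↑) ⁻¹' Ioo a b : Set F) = (↑) ⁻¹' Icc a b := by
    ext ⟨x, hx⟩
    simp only [mem_preimage, mem_Ioo, mem_Icc]
    refine ⟨fun h => ⟨h.1.le, h.2.le⟩, fun h => ⟨h.1.lt_of_ne ?_, h.2.lt_of_ne ?_⟩⟩ <;>
      rintro rfl <;> contradiction
  exact ⟨hIcc ▸ isClosed_Icc.preimage continuous_subtype_val,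
    isOpen_Ioo.preimage continuous_subtype_val⟩

lemma isTopologicalBasis_isClopen_of_interior_eq_empty {F : Set ℝ} (hF : interior F = ∅) :
    TopologicalSpace.IsTopologicalBasis {s : Set F | IsClopen s} := by
  refine TopologicalSpace.isTopologicalBasis_of_isOpen_of_nhds (fun _ hs => hs.isOpen) ?_
  intro x U hxU hU
  obtain ⟨W, hW, rfl⟩ := isOpen_induced_iff.1 hU
  obtain ⟨ε, hε, hball⟩ := Metric.isOpen_iff.1 hW x hxU
  have hdense : Dense Fᶜ := interior_eq_empty_iff_dense_compl.1 hF
  obtain ⟨a, ha, hax⟩ := hdense.exists_between (sub_lt_self (x : ℝ) hε)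
  obtain ⟨b, hb, hxb⟩ := hdense.exists_between (lt_add_of_pos_right (x : ℝ) hε)
  refine ⟨_, isClopen_preimage_val_Ioo ha hb, ⟨hax.2, hxb.1⟩, fun y hy => hball ?_⟩
  rw [Metric.mem_ball, Real.dist_eq, abs_lt]
  constructor <;> linarith [hy.1, hy.2, hax.1, hxb.2]

lemma indDim_eq_zero_of_volume_eq_zero {F : Set ℝ} (hF : volume F = 0) : indDim F = 0 :=
  indDim_eq_zero_of_indLE_one <| indLE_one_of_isTopologicalBasis_isClopen <|
    isTopologicalBasis_isClopen_of_interior_eq_empty (volume.interior_eq_empty_of_null hF)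

end InductiveDimension

/-- For every `0 < r ≤ 1` there are continuum-many pairwise distinct
subsets of `ℝ`, each of Hausdorff dimension `r`, Lebesgue measure `0`, and topological
dimension `0`. -/
theorem continuum_many_thin_fractals (r : ℝ) (hr : r ∈ Set.Ioc (0 : ℝ) 1) :
    ∃ 𝒻 : Set (Set ℝ), Cardinal.mk ↥𝒻 = Cardinal.continuum ∧
      ∀ F ∈ 𝒻, dimH F = ENNReal.ofReal r ∧ volume F = 0 ∧ indDim ↥F = 0 := by
  obtain ⟨T, hT_sub, hT_dim, hT_null⟩ := exists_subset_Icc_dimH_eq_volume_eq_zero hr.1 hr.2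
  have hdisjoint : Ioi (2 : ℝ) ⊆ Tᶜ := fun a ha haT => (hT_sub haT).2.not_gt ha
  refine ⟨(insert · T) '' Ioi 2, ?_, ?_⟩
  · rw [mk_image_eq_of_injOn _ _ ((Function.insert_injOn T).mono hdisjoint), mk_Ioi_real]
  rintro _ ⟨a, -, rfl⟩
  dsimp only
  have hnull : volume (insert a T) = 0 := by
    rw [insert_eq]
    exact measure_union_null (measure_singleton a) hT_null
  refine ⟨?_, hnull, indDim_eq_zero_of_volume_eq_zero hnull⟩
  rw [insert_eq, dimH_union, dimH_singleton, hT_dim, max_eq_right zero_le]
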